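/- Let f be a locally integrable function on ℝⁿ satisfying the BMO_L^0 conditions with constant M. Then there exists a constant C (depending only on n) such that for every x ∈ ℝⁿ and every 0 < r < ρ(x), the average f_{B(x,r)} satisfies |f_{B(x,r)}| ≤ C (1 + log(ρ(x)/r)) M. -/

import Mathlib

open MeasureTheory Metric Set

/-- The set whose supremum defines the critical radii function. -/
noncomputable def rhoSet (n : ℕ) (V : EuclideanSpace ℝ (Fin n) → ℝ)
    (x : EuclideanSpace ℝ (Fin n)) : Set ℝ :=
  {r : ℝ | 0 < r ∧ r ^ ((2 : ℝ) - n) * ∫ y in ball x r, V y ≤ 1}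

/-- The critical radii function `ρ` of Shen associated to the potential `V`. -/
noncomputable def rho (n : ℕ) (V : EuclideanSpace ℝ (Fin n) → ℝ)
    (x : EuclideanSpace ℝ (Fin n)) : ℝ :=
  sSup (rhoSet n V x)

/-- The average of `f` over the ball `B(x,r)`. -/
noncomputable def avgBall (n : ℕ) (f : EuclideanSpace ℝ (Fin n) → ℝ)
    (x : EuclideanSpace ℝ (Fin n)) (r : ℝ) : ℝ :=
  ((volume (ball x r)).toReal)⁻¹ * ∫ y in ball x r, f y

/-- `f` satisfies the `BMO_L^α` conditions with constant `M`. -/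
def BMOL (n : ℕ) (V : EuclideanSpace ℝ (Fin n) → ℝ) (α M : ℝ)
    (f : EuclideanSpace ℝ (Fin n) → ℝ) : Prop :=
  (∀ (x : EuclideanSpace ℝ (Fin n)) (r : ℝ), 0 < r →
    ((volume (ball x r)).toReal)⁻¹ * ∫ y in ball x r, |f y - avgBall n f x r|
      ≤ M * (volume (ball x r)).toReal ^ (α / n)) ∧
  (∀ (x : EuclideanSpace ℝ (Fin n)) (r : ℝ), rho n V x ≤ r →
    ((volume (ball x r)).toReal)⁻¹ * ∫ y in ball x r, |f y|
      ≤ M * (volume (ball x r)).toReal ^ (α / n))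

/-!
Doubling the radius of a ball changes the average of `f` by at most `2ⁿ M`: the mean oscillation
on the larger ball, inflated by the volume ratio `2ⁿ`. After `k ≤ 2 log (ρ(x)/r) + 1` doublings
the radius exceeds `ρ(x)`, where the average itself is at most `M` by the second condition.
-/

open Module
open scoped ENNReal

section SetAverage

variable {α : Type*} [MeasurableSpace α] {μ : Measure α} {f : α → ℝ} {s t : Set α}

lemma abs_setAverage_le_setAverage_abs (f : α → ℝ) (s : Set α) :
    |⨍ y in s, f y ∂μ| ≤ ⨍ y in s, |f y| ∂μ := by
  simpa only [setAverage_eq', Real.norm_eq_abs] using norm_integral_le_integral_norm f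

lemma setAverage_sub_const (hs₀ : μ s ≠ 0) (hs : μ s ≠ ∞) (hf : IntegrableOn f s μ)
    (c : ℝ) :
    ⨍ y in s, (f y - c) ∂μ = ⨍ y in s, f y ∂μ - c := by
  have hs' : μ.real s ≠ 0 := ENNReal.toReal_ne_zero.2 ⟨hs₀, hs⟩
  rw [setAverage_eq, setAverage_eq, integral_sub hf (integrableOn_const hs), setIntegral_const,
    smul_eq_mul, smul_eq_mul, smul_eq_mul]
  field_simp

lemma abs_setAverage_sub_le (hst : s ⊆ t) (hs₀ : μ s ≠ 0) (ht : μ t ≠ ∞)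
    (hf : IntegrableOn f t μ) (c : ℝ) :
    |⨍ y in s, f y ∂μ - c| ≤ μ.real t / μ.real s * ⨍ y in t, |f y - c| ∂μ := by
  have hs : μ s ≠ ∞ := ((measure_mono hst).trans_lt ht.lt_top).ne
  have hs_pos : 0 < μ.real s := ENNReal.toReal_pos hs₀ hs
  have ht_pos : 0 < μ.real t := hs_pos.trans_le (measureReal_mono hst ht)
  have hfc : IntegrableOn (fun y => |f y - c|) t μ := (hf.sub (integrableOn_const ht)).abs
  calc |⨍ y in s, f y ∂μ - c| = |⨍ y in s, (f y - c) ∂μ| := by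
        rw [setAverage_sub_const hs₀ hs (hf.mono_set hst)]
    _ ≤ (μ.real s)⁻¹ * ∫ y in s, |f y - c| ∂μ := by
        simpa only [setAverage_eq, smul_eq_mul] using abs_setAverage_le_setAverage_abs _ s
    _ ≤ (μ.real s)⁻¹ * ∫ y in t, |f y - c| ∂μ :=
        mul_le_mul_of_nonneg_left
          (setIntegral_mono_set hfc (.of_forall fun _ => abs_nonneg _) hst.eventuallyLE)
          (inv_nonneg.2 hs_pos.le)
    _ = μ.real t / μ.real s * ⨍ y in t, |f y - c| ∂μ := by
        rw [setAverage_eq, smul_eq_mul]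
        field_simp

end SetAverage

section AddHaar

variable {E : Type*} [NormedAddCommGroup E] [NormedSpace ℝ E] [FiniteDimensional ℝ E]
  [MeasurableSpace E] [BorelSpace E] {μ : Measure E} [μ.IsAddHaarMeasure] {f : E → ℝ}

lemma measureReal_ball_two_mul (x : E) {s : ℝ} (hs : 0 < s) :
    μ.real (ball x (2 * s)) = 2 ^ finrank ℝ E * μ.real (ball x s) := by
  rw [measureReal_def, measureReal_def, Measure.addHaar_ball_of_pos μ x hs,
    Measure.addHaar_ball_of_pos μ x (by positivity), mul_pow, ENNReal.toReal_mul,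
    ENNReal.toReal_mul, ENNReal.toReal_ofReal (by positivity),
    ENNReal.toReal_ofReal (by positivity)]
  ring

lemma abs_setAverage_ball_sub_setAverage_ball_two_mul_le (hf : LocallyIntegrable f μ) (x : E)
    {s M : ℝ} (hs : 0 < s)
    (hosc : ⨍ y in ball x (2 * s), |f y - ⨍ z in ball x (2 * s), f z ∂μ| ∂μ ≤ M) :
    |⨍ y in ball x s, f y ∂μ - ⨍ y in ball x (2 * s), f y ∂μ|
      ≤ 2 ^ finrank ℝ E * M := by
  have hs_pos : 0 < μ.real (ball x s) :=
    ENNReal.toReal_pos (measure_ball_pos μ x hs).ne' measure_ball_lt_top.ne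
  calc _ ≤ μ.real (ball x (2 * s)) / μ.real (ball x s) *
        ⨍ y in ball x (2 * s), |f y - ⨍ z in ball x (2 * s), f z ∂μ| ∂μ :=
        abs_setAverage_sub_le (ball_subset_ball (by linarith : s ≤ 2 * s))
          (measure_ball_pos μ x hs).ne' measure_ball_lt_top.ne
          ((hf.integrableOn_isCompact (isCompact_closedBall x _)).mono_set ball_subset_closedBall) _
    _ ≤ 2 ^ finrank ℝ E * M := by
        rw [measureReal_ball_two_mul x hs, mul_div_cancel_right₀ _ hs_pos.ne']
        gcongr

lemma abs_setAverage_ball_sub_setAverage_ball_two_pow_mul_le (hf : LocallyIntegrable f μ)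
    (x : E) {r M : ℝ} (hr : 0 < r)
    (hosc : ∀ s, 0 < s → ⨍ y in ball x s, |f y - ⨍ z in ball x s, f z ∂μ| ∂μ ≤ M) (k : ℕ) :
    |⨍ y in ball x r, f y ∂μ - ⨍ y in ball x (2 ^ k * r), f y ∂μ|
      ≤ k * (2 ^ finrank ℝ E * M) := by
  induction k with
  | zero => simp
  | succ k ih =>
    have hk : 0 < 2 ^ k * r := by positivity
    have hstep :=
      abs_setAverage_ball_sub_setAverage_ball_two_mul_le hf x hk (hosc _ (by positivity))
    rw [← mul_assoc, ← pow_succ'] at hstep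
    calc _ ≤ _ := abs_sub_le _ (⨍ y in ball x (2 ^ k * r), f y ∂μ) _
      _ ≤ k * (2 ^ finrank ℝ E * M) + 2 ^ finrank ℝ E * M := add_le_add ih hstep
      _ = (k + 1 : ℕ) * (2 ^ finrank ℝ E * M) := by push_cast; ring

end AddHaar

lemma exists_le_two_pow_and_add_one_le_two_mul_one_add_log {t : ℝ} (ht : 1 ≤ t) :
    ∃ k : ℕ, t ≤ 2 ^ k ∧ (k : ℝ) + 1 ≤ 2 * (1 + Real.log t) := by
  have hlogb : 0 ≤ Real.logb 2 t := Real.logb_nonneg one_lt_two ht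
  refine ⟨⌈Real.logb 2 t⌉₊, ?_, ?_⟩
  · calc t = 2 ^ Real.logb 2 t := (Real.rpow_logb two_pos (by norm_num) (by linarith)).symm
      _ ≤ 2 ^ (⌈Real.logb 2 t⌉₊ : ℝ) :=
          Real.rpow_le_rpow_of_exponent_le one_le_two (Nat.le_ceil _)
      _ = 2 ^ ⌈Real.logb 2 t⌉₊ := Real.rpow_natCast 2 _
  · have hceil : (⌈Real.logb 2 t⌉₊ : ℝ) < Real.logb 2 t + 1 := Nat.ceil_lt_add_one hlogb
    have hlogb_le : Real.logb 2 t ≤ 2 * Real.log t := by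
      rw [Real.logb, div_le_iff₀ (Real.log_pos one_lt_two)]
      nlinarith [Real.log_two_gt_d9, Real.log_nonneg ht]
    linarith

theorem abs_setAverage_ball_le_of_oscillation_le {E : Type*} [NormedAddCommGroup E]
    [NormedSpace ℝ E] [FiniteDimensional ℝ E] [MeasurableSpace E] [BorelSpace E]
    {μ : Measure E} [μ.IsAddHaarMeasure] {f : E → ℝ} (hf : LocallyIntegrable f μ) (x : E)
    {r R M : ℝ} (hr : 0 < r) (hrR : r ≤ R)
    (hosc : ∀ s, 0 < s → ⨍ y in ball x s, |f y - ⨍ z in ball x s, f z ∂μ| ∂μ ≤ M)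
    (hlarge : ∀ s, R ≤ s → ⨍ y in ball x s, |f y| ∂μ ≤ M) :
    |⨍ y in ball x r, f y ∂μ| ≤ 2 ^ (finrank ℝ E + 1) * (1 + Real.log (R / r)) * M := by
  obtain ⟨k, hk, hk_log⟩ :=
    exists_le_two_pow_and_add_one_le_two_mul_one_add_log ((one_le_div hr).2 hrR)
  have hM : 0 ≤ M :=
    ((abs_nonneg _).trans (abs_setAverage_le_setAverage_abs f (ball x R))).trans (hlarge R le_rfl)
  have hM_le : M ≤ 2 ^ finrank ℝ E * M := le_mul_of_one_le_left hM (one_le_pow₀ one_le_two)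
  calc |⨍ y in ball x r, f y ∂μ|
      ≤ |⨍ y in ball x r, f y ∂μ - ⨍ y in ball x (2 ^ k * r), f y ∂μ|
        + |⨍ y in ball x (2 ^ k * r), f y ∂μ| := by
        simpa using abs_sub_le _ (⨍ y in ball x (2 ^ k * r), f y ∂μ) 0
    _ ≤ k * (2 ^ finrank ℝ E * M) + M :=
        add_le_add (abs_setAverage_ball_sub_setAverage_ball_two_pow_mul_le hf x hr hosc k)
          ((abs_setAverage_le_setAverage_abs _ _).trans (hlarge _ ((div_le_iff₀ hr).1 hk)))
    _ ≤ (k + 1) * (2 ^ finrank ℝ E * M) := by linarith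
    _ ≤ 2 * (1 + Real.log (R / r)) * (2 ^ finrank ℝ E * M) := by gcongr
    _ = 2 ^ (finrank ℝ E + 1) * (1 + Real.log (R / r)) * M := by ring

lemma avgBall_eq_setAverage (n : ℕ) (f : EuclideanSpace ℝ (Fin n) → ℝ)
    (x : EuclideanSpace ℝ (Fin n)) (r : ℝ) : avgBall n f x r = ⨍ y in ball x r, f y := by
  rw [avgBall, setAverage_eq, smul_eq_mul, measureReal_def]

namespace BMOL

variable {n : ℕ} {V f : EuclideanSpace ℝ (Fin n) → ℝ} {M : ℝ}

lemma setAverage_abs_sub_setAverage_le (h : BMOL n V 0 M f) (x : EuclideanSpace ℝ (Fin n))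
    {s : ℝ} (hs : 0 < s) : ⨍ y in ball x s, |f y - ⨍ z in ball x s, f z| ≤ M := by
  simpa [avgBall_eq_setAverage, setAverage_eq, measureReal_def] using h.1 x s hs

lemma setAverage_abs_le_of_rho_le (h : BMOL n V 0 M f) (x : EuclideanSpace ℝ (Fin n))
    {s : ℝ} (hs : rho n V x ≤ s) : ⨍ y in ball x s, |f y| ≤ M := by
  simpa [setAverage_eq, measureReal_def] using h.2 x s hs

end BMOL

theorem stmt_10_general (n : ℕ)
    (V : EuclideanSpace ℝ (Fin n) → ℝ)
    (f : EuclideanSpace ℝ (Fin n) → ℝ) (hf : LocallyIntegrable f volume)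
    (M : ℝ) (hBMO : BMOL n V 0 M f) :
    ∃ C > (0 : ℝ), ∀ (x : EuclideanSpace ℝ (Fin n)) (r : ℝ), 0 < r → r < rho n V x →
      |avgBall n f x r| ≤ C * (1 + Real.log (rho n V x / r)) * M := by
  refine ⟨2 ^ (n + 1), by positivity, fun x r hr hrρ => ?_⟩
  have h := abs_setAverage_ball_le_of_oscillation_le hf x hr hrρ.le
    (fun _ hs => hBMO.setAverage_abs_sub_setAverage_le x hs)
    (fun _ hs => hBMO.setAverage_abs_le_of_rho_le x hs)
  rwa [finrank_euclideanSpace_fin, ← avgBall_eq_setAverage] at h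

theorem stmt_10 (n : ℕ) (hn : 3 ≤ n) (q : ℝ) (hq : (n : ℝ) / 2 < q)
    (V : EuclideanSpace ℝ (Fin n) → ℝ) (hV0 : ∀ x, 0 ≤ V x) (hVmeas : Measurable V)
    (hVloc : ∀ (x : EuclideanSpace ℝ (Fin n)) (r : ℝ), 0 < r →
      IntegrableOn (fun y => V y ^ q) (ball x r))
    (hVne : ¬ (V =ᵐ[volume] (0 : EuclideanSpace ℝ (Fin n) → ℝ)))
    (C_V : ℝ) (hCV : 0 < C_V)
    (hRH : ∀ (x : EuclideanSpace ℝ (Fin n)) (r : ℝ), 0 < r →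
      (((volume (ball x r)).toReal)⁻¹ * ∫ y in ball x r, V y ^ q) ^ (1 / q)
        ≤ C_V * (((volume (ball x r)).toReal)⁻¹ * ∫ y in ball x r, V y))
    (f : EuclideanSpace ℝ (Fin n) → ℝ) (hf : LocallyIntegrable f volume)
    (M : ℝ) (hM : 0 ≤ M) (hBMO : BMOL n V 0 M f) :
    ∃ C > (0 : ℝ), ∀ (x : EuclideanSpace ℝ (Fin n)) (r : ℝ), 0 < r → r < rho n V x →
      |avgBall n f x r| ≤ C * (1 + Real.log (rho n V x / r)) * M :=
  stmt_10_general n V f hf M hBMO
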